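/- Suppose {a_n}_{n=0}^∞ is a Stieltjes moment sequence with representing measure μ, κ is an integer ≥ 2, {a_n^{1/κ}}_{n=0}^∞ is a Stieltjes moment sequence with representing measure ν, μ((θ1,θ2)) = 0 for some real θ1, θ2 with 0 ≤ θ1 < θ2, and θ2 ≤ θ3 := sup supp μ < ∞. Set α = (θ1/θ3)·θ3^{1/κ}, β = θ2^{1/κ}, γ = θ3^{1/κ}, α† = (θ2/θ3)·θ3^{1/κ}, β† = θ1^{1/κ}. If either (a) β† < α†, or β† ≤ α† and κ ≥ 3, or β† = α† and β ∈ supp ν; or (b) (γ/β)·α < α† and β ∈ supp ν; then ν((α,β)) = 0. -/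

import Mathlib

open MeasureTheory

/-- The closed support of a Borel measure: the set of points all of whose open
neighbourhoods have positive measure. -/
def msupport {X : Type*} [TopologicalSpace X] [MeasurableSpace X] (μ : Measure X) : Set X :=
  {x | ∀ U : Set X, IsOpen U → x ∈ U → 0 < μ U}

/-- `μ` is a representing measure (on `[0,∞)`, modelled as a measure on `ℝ` vanishing on
`(-∞,0)`) of the Stieltjes moment sequence `a`. -/
def IsRepMeas (a : ℕ → ℝ) (μ : Measure ℝ) : Prop :=
  (∀ n, 0 ≤ a n) ∧ μ (Set.Iio 0) = 0 ∧
    ∀ n : ℕ, ∫⁻ x, ENNReal.ofReal (x ^ n) ∂μ = ENNReal.ofReal (a n)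

/-- `a` is a Stieltjes moment sequence. -/
def IsStieltjes (a : ℕ → ℝ) : Prop :=
  ∃ μ : Measure ℝ, IsRepMeas a μ

/-- A Stieltjes moment sequence is determinate if it has a unique representing measure. -/
def IsDeterminate (a : ℕ → ℝ) : Prop :=
  ∀ μ ν : Measure ℝ, IsRepMeas a μ → IsRepMeas a ν → μ = ν

/-!
Let `ρ` be the `κ`-fold multiplicative convolution power of `ν`. Its moments are
`(a n ^ (1/κ)) ^ κ = a n`, and a Stieltjes moment sequence with a compactly supported
representing measure is determinate (Weierstrass approximation), so `μ = ρ`. Comparing the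
exponential growth rates of the moments of `μ` and `ν` gives `sup supp ν = θ₃ ^ (1/κ) = γ`,
so `γ ∈ supp ν`. Hence for `s, y ∈ supp ν` every product `s * y ^ j * γ ^ (κ - 1 - j)` lies in
`supp μ` and avoids the gap `(θ₁, θ₂)`. For `s ∈ (α, β)` the first of these products is at least
`θ₂`, and for `y = s` or `y = β` (depending on the case) the last one is below `θ₂`; but they form
a geometric progression of ratio `y / γ > θ₁ / θ₂`, which cannot jump over the gap.
-/
open Set Filter Topology
open scoped ENNReal

theorem msupport_eq_support {X : Type*} [TopologicalSpace X] [MeasurableSpace X]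
    (μ : Measure X) : msupport μ = μ.support := by
  ext x
  simp only [msupport, Measure.support_eq_forall_isOpen, mem_ofPred_eq]
  exact forall_congr' fun U => forall_comm

theorem measure_compl_eq_zero_of_support_subset {X : Type*} [TopologicalSpace X]
    [MeasurableSpace X] [HereditarilyLindelofSpace X] {μ : Measure X} {s : Set X}
    (h : μ.support ⊆ s) : μ sᶜ = 0 :=
  measure_mono_null (compl_subset_compl.2 h) Measure.measure_compl_support

theorem le_of_forall_mul_pow_le {δ r R C : ℝ} (hδ : 0 < δ) (hR : 0 ≤ R)
    (h : ∀ n : ℕ, δ * r ^ n ≤ C * R ^ n) : r ≤ R := by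
  by_contra! hRr
  have hr : 0 < r := hR.trans_lt hRr
  have hlim : Tendsto (fun n : ℕ => C * (R / r) ^ n) atTop (𝓝 0) := by
    simpa using (tendsto_pow_atTop_nhds_zero_of_lt_one (div_nonneg hR hr.le)
      ((div_lt_one hr).2 hRr)).const_mul C
  refine hδ.not_ge (ge_of_tendsto' hlim fun n => ?_)
  rw [div_pow, ← mul_div_assoc, le_div_iff₀ (pow_pos hr n)]
  exact h n

theorem rpow_one_div_pow {t : ℝ} (ht : 0 ≤ t) {k : ℕ} (hk : k ≠ 0) :
    (t ^ (1 / (k : ℝ))) ^ k = t := by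
  rw [one_div, Real.rpow_inv_natCast_pow ht hk]

theorem div_mul_rpow_one_div_mul_pow_pred {t : ℝ} (ht : 0 < t) {k : ℕ} (hk : k ≠ 0) (x : ℝ) :
    x / t * t ^ (1 / (k : ℝ)) * (t ^ (1 / (k : ℝ))) ^ (k - 1) = x := by
  rw [mul_assoc, ← pow_succ', Nat.sub_add_cancel (Nat.one_le_iff_ne_zero.2 hk),
    rpow_one_div_pow ht.le hk, div_mul_cancel₀ x ht.ne']

def IsGrowthRate (c : ℕ → ℝ) (R : ℝ) : Prop :=
  (∃ C, ∀ n, c n ≤ C * R ^ n) ∧ ∀ r, 0 ≤ r → r < R → ∃ δ > 0, ∀ n, δ * r ^ n ≤ c n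

theorem IsGrowthRate.rpow_one_div {c : ℕ → ℝ} {R : ℝ} {k : ℕ} (h : IsGrowthRate c R)
    (hc : ∀ n, 0 ≤ c n) (hR : 0 ≤ R) (hk : k ≠ 0) :
    IsGrowthRate (fun n => c n ^ (1 / (k : ℝ))) (R ^ (1 / (k : ℝ))) := by
  have hk' : (0 : ℝ) < 1 / k := by positivity
  obtain ⟨⟨C, hC⟩, hlow⟩ := h
  have hC0 : 0 ≤ C := by simpa using (hc 0).trans (hC 0)
  refine ⟨⟨C ^ (1 / (k : ℝ)), fun n => ?_⟩, fun r hr hrR => ?_⟩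
  · rw [Real.rpow_pow_comm hR, ← Real.mul_rpow hC0 (pow_nonneg hR n)]
    exact Real.rpow_le_rpow (hc n) (hC n) hk'.le
  · have hrk : r ^ k < R := rpow_one_div_pow hR hk ▸ pow_lt_pow_left₀ hrR hr hk
    obtain ⟨δ, hδ, hδc⟩ := hlow (r ^ k) (pow_nonneg hr k) hrk
    refine ⟨δ ^ (1 / (k : ℝ)), Real.rpow_pos_of_pos hδ _, fun n => ?_⟩
    have hrn : ((r ^ k) ^ n) ^ (1 / (k : ℝ)) = r ^ n := by
      rw [← pow_mul, mul_comm, pow_mul, one_div, Real.pow_rpow_inv_natCast (pow_nonneg hr n) hk]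
    rw [← hrn, ← Real.mul_rpow hδ.le (by positivity)]
    exact Real.rpow_le_rpow (by positivity) (hδc n) hk'.le

namespace MeasureTheory.Measure

theorem integrable_of_support_subset_Icc {m : Measure ℝ} [IsFiniteMeasure m] {a b : ℝ}
    (hm : m.support ⊆ Icc a b) {f : ℝ → ℝ} (hf : Continuous f) : Integrable f m :=
  restrict_eq_self_of_ae_mem (measure_compl_eq_zero_of_support_subset hm) ▸ hf.integrableOn_Icc

theorem integral_eval_eq_of_integral_pow_eq {μ ρ : Measure ℝ} [IsFiniteMeasure μ]
    [IsFiniteMeasure ρ] {a b : ℝ} (hμ : μ.support ⊆ Icc a b) (hρ : ρ.support ⊆ Icc a b)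
    (h : ∀ n : ℕ, ∫ x, x ^ n ∂μ = ∫ x, x ^ n ∂ρ) (p : Polynomial ℝ) :
    ∫ x, p.eval x ∂μ = ∫ x, p.eval x ∂ρ := by
  induction p using Polynomial.induction_on' with
  | add p q hp hq =>
    simp only [Polynomial.eval_add]
    rw [integral_add (integrable_of_support_subset_Icc hμ p.continuous)
        (integrable_of_support_subset_Icc hμ q.continuous),
      integral_add (integrable_of_support_subset_Icc hρ p.continuous)
        (integrable_of_support_subset_Icc hρ q.continuous), hp, hq]
  | monomial n r =>
    simp only [Polynomial.eval_monomial]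
    rw [integral_const_mul, integral_const_mul, h n]

theorem ext_of_integral_pow_eq {μ ρ : Measure ℝ} [IsFiniteMeasure μ]
    [IsFiniteMeasure ρ] {a b : ℝ} (hμ : μ.support ⊆ Icc a b) (hρ : ρ.support ⊆ Icc a b)
    (h : ∀ n : ℕ, ∫ x, x ^ n ∂μ = ∫ x, x ^ n ∂ρ) : μ = ρ := by
  refine ext_of_forall_integral_eq_of_IsFiniteMeasure fun f => eq_of_forall_dist_le fun ε hε => ?_
  set K := μ.real univ + ρ.real univ
  have hK : 0 ≤ K := by positivity
  obtain ⟨p, hp⟩ := exists_polynomial_near_of_continuousOn a b f f.continuous.continuousOn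
    (ε / (K + 1)) (by positivity)
  have hclose : ∀ (m : Measure ℝ) [IsFiniteMeasure m], m.support ⊆ Icc a b →
      dist (∫ x, f x ∂m) (∫ x, p.eval x ∂m) ≤ ε / (K + 1) * m.real univ := by
    intro m _ hm
    rw [dist_eq_norm, ← integral_sub (integrable_of_support_subset_Icc hm f.continuous)
      (integrable_of_support_subset_Icc hm p.continuous)]
    refine norm_integral_le_of_norm_le_const ?_
    filter_upwards [measure_compl_eq_zero_of_support_subset hm] with x hx
    rw [Real.norm_eq_abs, abs_sub_comm]
    exact (hp x hx).le
  calc dist (∫ x, f x ∂μ) (∫ x, f x ∂ρ)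
      ≤ dist (∫ x, f x ∂μ) (∫ x, p.eval x ∂μ) + dist (∫ x, f x ∂ρ) (∫ x, p.eval x ∂ρ) := by
        rw [integral_eval_eq_of_integral_pow_eq hμ hρ h p]
        exact dist_triangle_right _ _ _
    _ ≤ ε / (K + 1) * K := by linarith [hclose μ hμ, hclose ρ hρ]
    _ ≤ ε := by
        rw [div_mul_eq_mul_div, div_le_iff₀ (by positivity)]
        nlinarith

section Monoid

variable {M : Type*} [Monoid M] [MeasurableSpace M]

noncomputable def mconvPow (ν : Measure M) : ℕ → Measure M
  | 0 => dirac 1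
  | k + 1 => mconvPow ν k ∗ₘ ν

variable [TopologicalSpace M]

theorem one_mem_support_mconvPow_zero (ν : Measure M) : (1 : M) ∈ (ν.mconvPow 0).support :=
  (mem_support_iff_forall _).2 fun U hU => by
    simp [mconvPow, dirac_apply_of_mem (mem_of_mem_nhds hU)]

variable [ContinuousMul M] [MeasurableMul₂ M]

theorem mul_mem_support_mconv {μ ν : Measure M} [SFinite ν] {x y : M} (hx : x ∈ μ.support)
    (hy : y ∈ ν.support) : x * y ∈ (μ ∗ₘ ν).support := by
  refine (mem_support_iff_forall _).2 fun U hU => ?_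
  obtain ⟨V, hV, W, hW, hVW⟩ :=
    mem_nhds_prod_iff.1 (continuous_mul.continuousAt.preimage_mem_nhds hU)
  calc 0 < μ V * ν W := ENNReal.mul_pos ((mem_support_iff_forall x).1 hx V hV).ne'
        ((mem_support_iff_forall y).1 hy W hW).ne'
    _ = μ.prod ν (V ×ˢ W) := (prod_prod V W).symm
    _ ≤ μ.prod ν ((fun p : M × M => p.1 * p.2) ⁻¹' U) := measure_mono hVW
    _ ≤ (μ ∗ₘ ν) U := le_map_apply (by fun_prop) U

theorem mul_pow_mem_support_mconvPow {ν : Measure M} [SFinite ν] {x y : M} {j : ℕ}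
    (hx : x ∈ (ν.mconvPow j).support) (hy : y ∈ ν.support) (k : ℕ) :
    x * y ^ k ∈ (ν.mconvPow (j + k)).support := by
  induction k with
  | zero => simpa using hx
  | succ k ih =>
    rw [pow_succ, ← mul_assoc]
    exact mul_mem_support_mconv ih hy

end Monoid

theorem ae_nonneg_mconv {μ ν : Measure ℝ} (hμ : ∀ᵐ x ∂μ, 0 ≤ x) (hν : ∀ᵐ y ∂ν, 0 ≤ y) :
    ∀ᵐ z ∂(μ ∗ₘ ν), 0 ≤ z := by
  rw [mconv, ae_map_iff (by fun_prop) measurableSet_Ici]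
  filter_upwards [quasiMeasurePreserving_fst.ae hμ, quasiMeasurePreserving_snd.ae hν]
    with p hx hy using mul_nonneg hx hy

theorem lintegral_ofReal_pow_mconv {μ ν : Measure ℝ} [SFinite ν] (hμ : ∀ᵐ x ∂μ, 0 ≤ x)
    (n : ℕ) : ∫⁻ z, ENNReal.ofReal (z ^ n) ∂(μ ∗ₘ ν) =
      (∫⁻ x, ENNReal.ofReal (x ^ n) ∂μ) * ∫⁻ y, ENNReal.ofReal (y ^ n) ∂ν := by
  rw [lintegral_mconv (by fun_prop), ← lintegral_mul_const _ (by fun_prop)]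
  refine lintegral_congr_ae ?_
  filter_upwards [hμ] with x hx
  simp_rw [mul_pow, ENNReal.ofReal_mul (pow_nonneg hx n)]
  exact lintegral_const_mul _ (by fun_prop)

end MeasureTheory.Measure

namespace IsRepMeas

variable {c : ℕ → ℝ} {m : Measure ℝ}

theorem ae_nonneg (h : IsRepMeas c m) : ∀ᵐ x ∂m, 0 ≤ x := by
  simpa [ae_iff, Iio] using h.2.1

theorem isFiniteMeasure (h : IsRepMeas c m) : IsFiniteMeasure m := by
  constructor
  have h0 := h.2.2 0
  simp only [pow_zero, ENNReal.ofReal_one, lintegral_one] at h0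
  exact h0 ▸ ENNReal.ofReal_lt_top

theorem integrable_pow (h : IsRepMeas c m) (n : ℕ) : Integrable (fun x => x ^ n) m := by
  refine (lintegral_ofReal_ne_top_iff_integrable (by fun_prop) ?_).1 (by simp [h.2.2 n])
  filter_upwards [h.ae_nonneg] with x hx using pow_nonneg hx n

theorem integral_pow (h : IsRepMeas c m) (n : ℕ) : ∫ x, x ^ n ∂m = c n := by
  rw [integral_eq_lintegral_of_nonneg_ae _ (by fun_prop), h.2.2 n, ENNReal.toReal_ofReal (h.1 n)]
  filter_upwards [h.ae_nonneg] with x hx using pow_nonneg hx n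

theorem support_subset_Ici (h : IsRepMeas c m) : m.support ⊆ Ici 0 :=
  Measure.support_subset_of_isClosed isClosed_Ici h.ae_nonneg

theorem measureReal_Ioi_mul_pow_le (h : IsRepMeas c m) {r : ℝ} (hr : 0 ≤ r) (n : ℕ) :
    m.real (Ioi r) * r ^ n ≤ c n := by
  have := h.isFiniteMeasure
  calc m.real (Ioi r) * r ^ n = ∫ _ in Ioi r, r ^ n ∂m := by
        rw [setIntegral_const, smul_eq_mul]
    _ ≤ ∫ x in Ioi r, x ^ n ∂m :=
        setIntegral_mono_on (integrableOn_const (measure_ne_top _ _))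
          (h.integrable_pow n).integrableOn measurableSet_Ioi
          fun x hx => pow_le_pow_left₀ hr (le_of_lt hx) n
    _ ≤ ∫ x, x ^ n ∂m := setIntegral_le_integral (h.integrable_pow n)
        (by filter_upwards [h.ae_nonneg] with x hx using pow_nonneg hx n)
    _ = c n := h.integral_pow n

theorem le_measureReal_univ_mul_pow (h : IsRepMeas c m) {R : ℝ} (hR : m.support ⊆ Iic R)
    (n : ℕ) : c n ≤ m.real univ * R ^ n := by
  have := h.isFiniteMeasure
  have hIcc : ∀ᵐ x ∂m, x ∈ Icc 0 R := by
    rw [ae_iff]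
    exact measure_compl_eq_zero_of_support_subset fun x hx => ⟨h.support_subset_Ici hx, hR hx⟩
  calc c n = ∫ x, x ^ n ∂m := (h.integral_pow n).symm
    _ ≤ ∫ _, R ^ n ∂m := integral_mono_ae (h.integrable_pow n) (integrable_const _)
        (by filter_upwards [hIcc] with x hx using pow_le_pow_left₀ hx.1 hx.2 n)
    _ = m.real univ * R ^ n := by rw [integral_const, smul_eq_mul]

theorem support_subset_Icc (h : IsRepMeas c m) {R C : ℝ} (hR : 0 ≤ R)
    (hC : ∀ n, c n ≤ C * R ^ n) : m.support ⊆ Icc 0 R := by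
  intro y hy
  refine ⟨h.support_subset_Ici hy, ?_⟩
  by_contra! hRy
  have hpos : 0 < m (Ioi ((R + y) / 2)) :=
    (Measure.mem_support_iff_forall y).1 hy _ (Ioi_mem_nhds (by linarith))
  have := h.isFiniteMeasure
  have hle := le_of_forall_mul_pow_le (ENNReal.toReal_pos hpos.ne' (measure_ne_top _ _)) hR
    fun n => (h.measureReal_Ioi_mul_pow_le (by linarith) n).trans (hC n)
  linarith

theorem isGrowthRate (h : IsRepMeas c m) {R : ℝ} (hR : IsLUB m.support R) :
    IsGrowthRate c R := by
  refine ⟨⟨_, h.le_measureReal_univ_mul_pow fun x hx => hR.1 hx⟩, fun r hr hrR => ?_⟩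
  obtain ⟨y, hy, hry, -⟩ := hR.exists_between hrR
  have := h.isFiniteMeasure
  have hpos : 0 < m (Ioi r) := (Measure.mem_support_iff_forall y).1 hy _ (Ioi_mem_nhds hry)
  exact ⟨_, ENNReal.toReal_pos hpos.ne' (measure_ne_top _ _),
    h.measureReal_Ioi_mul_pow_le hr⟩

theorem isLUB_support (h : IsRepMeas c m) {R : ℝ} (hR : 0 < R) (hc : IsGrowthRate c R) :
    IsLUB m.support R := by
  obtain ⟨⟨C, hC⟩, hlow⟩ := hc
  refine ⟨fun x hx => (h.support_subset_Icc hR.le hC hx).2, fun b hb => ?_⟩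
  by_contra! hbR
  obtain ⟨r, hbr, hrR⟩ := exists_between (max_lt hbR hR)
  obtain ⟨δ, hδ, hδc⟩ := hlow r ((le_max_right b 0).trans hbr.le) hrR
  have hle := le_of_forall_mul_pow_le hδ (le_max_right b 0) fun n =>
    (hδc n).trans (h.le_measureReal_univ_mul_pow (fun x hx => le_max_of_le_left (hb hx)) n)
  linarith

theorem isDeterminate {μ : Measure ℝ} (h : IsRepMeas c μ) {R : ℝ} (hR : 0 ≤ R)
    (hsupp : μ.support ⊆ Iic R) : IsDeterminate c := by
  have hIcc : ∀ {m}, IsRepMeas c m → m.support ⊆ Icc 0 R := fun hm =>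
    hm.support_subset_Icc hR (h.le_measureReal_univ_mul_pow hsupp)
  intro μ₁ μ₂ h₁ h₂
  have := h₁.isFiniteMeasure
  have := h₂.isFiniteMeasure
  exact Measure.ext_of_integral_pow_eq (hIcc h₁) (hIcc h₂) fun n => by
    rw [h₁.integral_pow, h₂.integral_pow]

theorem mconvPow {ν : Measure ℝ} (h : IsRepMeas c ν) (k : ℕ) :
    IsRepMeas (fun n => c n ^ k) (ν.mconvPow k) := by
  have := h.isFiniteMeasure
  induction k with
  | zero =>
    refine ⟨fun n => by simp, by simp [Measure.mconvPow], fun n => ?_⟩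
    simp [Measure.mconvPow]
  | succ k ih =>
    refine ⟨fun n => pow_nonneg (h.1 n) _, ?_, fun n => ?_⟩
    · simpa [ae_iff, Iio, Measure.mconvPow] using Measure.ae_nonneg_mconv ih.ae_nonneg h.ae_nonneg
    · rw [Measure.mconvPow, Measure.lintegral_ofReal_pow_mconv ih.ae_nonneg, ih.2.2 n, h.2.2 n,
        ← ENNReal.ofReal_mul (pow_nonneg (h.1 n) k), ← pow_succ]

end IsRepMeas

theorem exists_mul_pow_succ_mem_Ioo {a b c q : ℝ} (hq : 0 ≤ q) (hab : a < q * b) (hc : b ≤ c)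
    {n : ℕ} (hn : c * q ^ n < b) : ∃ j < n, c * q ^ (j + 1) ∈ Ioo a b := by
  induction n with
  | zero => simp at hn; linarith
  | succ n ih =>
    by_cases hbn : b ≤ c * q ^ n
    · refine ⟨n, n.lt_succ_self, ?_, hn⟩
      calc a < q * b := hab
        _ ≤ q * (c * q ^ n) := mul_le_mul_of_nonneg_left hbn hq
        _ = c * q ^ (n + 1) := by ring
    · obtain ⟨j, hj, hmem⟩ := ih (not_le.1 hbn)
      exact ⟨j, hj.trans n.lt_succ_self, hmem⟩

theorem false_of_forall_mul_pow_notMem_Ioo {n : ℕ} {s y γ θ1 θ2 : ℝ} (hγ : 0 < γ) (hy : 0 ≤ y)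
    (hratio : θ1 * γ < y * θ2) (hfirst : θ2 ≤ s * γ ^ n) (hlast : s * y ^ n < θ2)
    (hgap : ∀ j ≤ n, s * y ^ j * γ ^ (n - j) ∉ Ioo θ1 θ2) : False := by
  have hterm : ∀ j ≤ n, s * γ ^ n * (y / γ) ^ j = s * y ^ j * γ ^ (n - j) := by
    intro j hj
    obtain ⟨m, rfl⟩ := Nat.exists_eq_add_of_le hj
    rw [Nat.add_sub_cancel_left, div_pow, pow_add]
    field_simp
  obtain ⟨j, hj, hmem⟩ := exists_mul_pow_succ_mem_Ioo (div_nonneg hy hγ.le)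
    (by rwa [div_mul_eq_mul_div, lt_div_iff₀ hγ]) hfirst (by rwa [hterm n le_rfl, Nat.sub_self,
      pow_zero, mul_one])
  exact hgap (j + 1) hj (hterm (j + 1) hj ▸ hmem)

theorem exists_mem_mul_pow_lt_of_cond {S : Set ℝ} {κ : ℕ} (hκ : 2 ≤ κ)
    {θ1 θ2 α β γ αd βd s : ℝ} (hγ : 0 < γ) (hs : 0 < s) (hsβ : s < β) (hβγ : β ≤ γ)
    (hβκ : β ^ κ = θ2) (hβdκ : βd ^ κ = θ1) (hαγ : α * γ ^ (κ - 1) = θ1)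
    (hαdγ : αd * γ ^ (κ - 1) = θ2) (hαds : αd ≤ s) (hsβd : s ≤ βd) (hsS : s ∈ S)
    (hcond : (βd < αd ∨ (βd ≤ αd ∧ 3 ≤ κ) ∨ (βd = αd ∧ β ∈ S)) ∨ (γ / β * α < αd ∧ β ∈ S)) :
    ∃ y ∈ S, 0 ≤ y ∧ s * y ^ (κ - 1) < θ2 ∧ θ1 * γ < y * θ2 := by
  have hβ : 0 < β := hs.trans hsβ
  have hpred : ∀ {x : ℝ}, x * x ^ (κ - 1) = x ^ κ := fun {x} => by
    rw [← pow_succ', Nat.sub_add_cancel (by omega)]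
  have hlast : ∀ {y}, s ≤ y → y ≤ β → s * y ^ (κ - 1) < θ2 := fun {y} hsy hyβ => by
    have hy : 0 < y := hs.trans_le hsy
    calc s * y ^ (κ - 1) < β * β ^ (κ - 1) :=
          mul_lt_mul hsβ (pow_le_pow_left₀ hy.le hyβ _) (pow_pos hy _) hβ.le
      _ = θ2 := by rw [hpred, hβκ]
  rcases hcond with (h | hcond) | ⟨h, hβS⟩
  · linarith
  · have hle : βd ≤ αd := hcond.elim And.left fun h => h.1.le
    have hθ1 : θ1 = s ^ κ := by rw [← hβdκ, le_antisymm hsβd (hle.trans hαds)]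
    have hθ2 : θ2 = s * (γ * γ ^ (κ - 2)) := by
      rw [← hαdγ, le_antisymm hαds (hsβd.trans hle), ← pow_succ']
      congr 2
      omega
    obtain ⟨y, hyS, hsy, hyβ, hlt⟩ :
        ∃ y ∈ S, s ≤ y ∧ y ≤ β ∧ s * s ^ (κ - 2) < y * γ ^ (κ - 2) := by
      rcases hcond with ⟨-, hκ3⟩ | ⟨-, hβS⟩
      · exact ⟨s, hsS, le_rfl, hsβ.le, mul_lt_mul_of_pos_left
          (pow_lt_pow_left₀ (hsβ.trans_le hβγ) hs.le (by omega)) hs⟩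
      · exact ⟨β, hβS, hsβ.le, le_rfl, mul_lt_mul hsβ
          (pow_le_pow_left₀ hs.le (hsβ.le.trans hβγ) _) (pow_pos hs _) hβ.le⟩
    refine ⟨y, hyS, hs.le.trans hsy, hlast hsy hyβ, ?_⟩
    rw [hθ1, hθ2, ← hpred, show κ - 1 = κ - 2 + 1 by omega, pow_succ']
    calc s * (s * s ^ (κ - 2)) * γ = s * γ * (s * s ^ (κ - 2)) := by ring
      _ < s * γ * (y * γ ^ (κ - 2)) := mul_lt_mul_of_pos_left hlt (by positivity)
      _ = y * (s * (γ * γ ^ (κ - 2))) := by ring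
  · refine ⟨β, hβS, hβ.le, hlast hsβ.le le_rfl, ?_⟩
    calc θ1 * γ = γ / β * α * (β * γ ^ (κ - 1)) := by rw [← hαγ]; field_simp
      _ < αd * (β * γ ^ (κ - 1)) := mul_lt_mul_of_pos_right h (by positivity)
      _ = β * θ2 := by rw [← hαdγ]; ring

theorem false_of_mem_Ioo_of_forall_mul_pow_notMem_Ioo {S : Set ℝ} {κ : ℕ} (hκ : 2 ≤ κ)
    {θ1 θ2 θ3 : ℝ} (h0 : 0 ≤ θ1) (h12 : θ1 < θ2) (h23 : θ2 ≤ θ3) {α β γ αd βd : ℝ}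
    (hα : α = θ1 / θ3 * θ3 ^ (1 / (κ : ℝ))) (hβ : β = θ2 ^ (1 / (κ : ℝ)))
    (hγ : γ = θ3 ^ (1 / (κ : ℝ))) (hαd : αd = θ2 / θ3 * θ3 ^ (1 / (κ : ℝ)))
    (hβd : βd = θ1 ^ (1 / (κ : ℝ)))
    (hcond : (βd < αd ∨ (βd ≤ αd ∧ 3 ≤ κ) ∨ (βd = αd ∧ β ∈ S)) ∨ (γ / β * α < αd ∧ β ∈ S))
    {s : ℝ} (hs : s ∈ Ioo α β) (hsS : s ∈ S)
    (hgap : ∀ y ∈ S, ∀ j ≤ κ - 1, s * y ^ j * γ ^ (κ - 1 - j) ∉ Ioo θ1 θ2) : False := by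
  have hκ0 : κ ≠ 0 := by omega
  have hθ2 : 0 < θ2 := h0.trans_lt h12
  have hθ3 : 0 < θ3 := hθ2.trans_le h23
  have hγ0 : 0 < γ := hγ ▸ Real.rpow_pos_of_pos hθ3 _
  have hβγ : β ≤ γ := hβ ▸ hγ ▸ Real.rpow_le_rpow hθ2.le h23 (by positivity)
  have hβκ : β ^ κ = θ2 := hβ ▸ rpow_one_div_pow hθ2.le hκ0
  have hβdκ : βd ^ κ = θ1 := hβd ▸ rpow_one_div_pow h0 hκ0
  have hαγ : α * γ ^ (κ - 1) = θ1 := hα ▸ hγ ▸ div_mul_rpow_one_div_mul_pow_pred hθ3 hκ0 θ1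
  have hαdγ : αd * γ ^ (κ - 1) = θ2 := hαd ▸ hγ ▸ div_mul_rpow_one_div_mul_pow_pred hθ3 hκ0 θ2
  have hs0 : 0 < s := (hα ▸ by positivity : 0 ≤ α).trans_lt hs.1
  have hfirst : θ2 ≤ s * γ ^ (κ - 1) := by
    have := hgap s hsS 0 (Nat.zero_le _)
    simp only [pow_zero, mul_one, Nat.sub_zero, mem_Ioo, not_and, not_lt] at this
    exact this (hαγ ▸ mul_lt_mul_of_pos_right hs.1 (pow_pos hγ0 _))
  have hsκ : s ^ κ ≤ θ1 := by
    have := hgap s hsS (κ - 1) le_rfl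
    rw [Nat.sub_self, pow_zero, mul_one, ← pow_succ', Nat.sub_add_cancel (by omega)] at this
    by_contra! h
    exact this ⟨h, hβκ ▸ pow_lt_pow_left₀ hs.2 hs0.le hκ0⟩
  have hαds : αd ≤ s := le_of_mul_le_mul_right (hαdγ ▸ hfirst) (pow_pos hγ0 _)
  have hsβd : s ≤ βd := (pow_le_pow_iff_left₀ hs0.le (hβd ▸ Real.rpow_nonneg h0 _) hκ0).1
    (hβdκ ▸ hsκ)
  obtain ⟨y, hyS, hy0, hlast, hratio⟩ := exists_mem_mul_pow_lt_of_cond hκ hγ0 hs0 hs.2 hβγ hβκ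
    hβdκ hαγ hαdγ hαds hsβd hsS hcond
  exact false_of_forall_mul_pow_notMem_Ioo hγ0 hy0 hratio hfirst hlast (hgap y hyS)

theorem stmt9 (a : ℕ → ℝ) (μ ν : Measure ℝ) (κ : ℕ) (hκ : 2 ≤ κ)
    (hμ : IsRepMeas a μ)
    (hν : IsRepMeas (fun n => a n ^ (1 / (κ : ℝ))) ν)
    (θ1 θ2 θ3 : ℝ) (h0 : 0 ≤ θ1) (h12 : θ1 < θ2) (h23 : θ2 ≤ θ3)
    (hθ3 : IsLUB (msupport μ) θ3)
    (hhole : μ (Set.Ioo θ1 θ2) = 0)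
    (α β γ αd βd : ℝ)
    (hα : α = θ1 / θ3 * θ3 ^ (1 / (κ : ℝ)))
    (hβ : β = θ2 ^ (1 / (κ : ℝ)))
    (hγ : γ = θ3 ^ (1 / (κ : ℝ)))
    (hαd : αd = θ2 / θ3 * θ3 ^ (1 / (κ : ℝ)))
    (hβd : βd = θ1 ^ (1 / (κ : ℝ)))
    (hcond : (βd < αd ∨ (βd ≤ αd ∧ 3 ≤ κ) ∨ (βd = αd ∧ β ∈ msupport ν)) ∨
      (γ / β * α < αd ∧ β ∈ msupport ν)) :
    ν (Set.Ioo α β) = 0 := by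
  rw [msupport_eq_support] at hθ3 hcond
  have hκ0 : κ ≠ 0 := by omega
  have hθ3pos : 0 < θ3 := (h0.trans_lt h12).trans_le h23
  have hγν : γ ∈ ν.support := by
    have hLUB := hν.isLUB_support (hγ ▸ Real.rpow_pos_of_pos hθ3pos _)
      (hγ ▸ (hμ.isGrowthRate hθ3).rpow_one_div hμ.1 hθ3pos.le hκ0)
    exact hLUB.mem_of_isClosed hLUB.nonempty Measure.isClosed_support
  have hμν : μ = ν.mconvPow κ := hμ.isDeterminate hθ3pos.le (fun x hx => hθ3.1 hx) μ _ hμ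
    (by simpa only [rpow_one_div_pow (hμ.1 _) hκ0] using hν.mconvPow κ)
  have := hν.isFiniteMeasure
  refine measure_mono_null (t := ν.supportᶜ) (fun s hs hsν => ?_) Measure.measure_compl_support
  refine false_of_mem_Ioo_of_forall_mul_pow_notMem_Ioo hκ h0 h12 h23 hα hβ hγ hαd hβd hcond hs
    hsν fun y hy j hj hmem => ?_
  have hprod := Measure.mul_pow_mem_support_mconvPow (Measure.mul_pow_mem_support_mconvPow
    (Measure.mul_pow_mem_support_mconvPow (Measure.one_mem_support_mconvPow_zero ν) hsν 1) hy j)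
    hγν (κ - 1 - j)
  rw [show 0 + 1 + j + (κ - 1 - j) = κ by omega, ← hμν, one_mul, pow_one] at hprod
  exact ((Measure.mem_support_iff_forall _).1 hprod _ (isOpen_Ioo.mem_nhds hmem)).ne' hhole
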